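/- arXiv:2204.03047 — 2 statements merged into one kernel-verified Lean document; each statement's English description precedes it below -/
import Mathlib

section
/- Let k be a field, let R = k[[x]] be the power series ring in one variable over k with maximal ideal m_R = (x), and for n ∈ ℕ let I_n = (x^{⌈nπ⌉}) (so I_0 = R). Then 𝓘 = {I_n} is a filtration on R, and its analytic spread is ℓ(𝓘) = 0 < 1 = dim R. In particular, for every n > 0 and every f ∈ I_n there exists r ∈ ℤ_{>0} such that f^r ∈ m_R I_{rn}. -/
open Polynomial

/-- A filtration `I_0 = R ⊇ I_1 ⊇ I_2 ⊇ ⋯` of ideals of `R` with `I_m * I_n ⊆ I_{m+n}`. -/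
structure IdealFiltration (R : Type*) [CommRing R] where
  I : ℕ → Ideal R
  I_zero : I 0 = ⊤
  I_antitone : ∀ n, I (n + 1) ≤ I n
  I_mul : ∀ m n, I m * I n ≤ I (m + n)

namespace IdealFiltration

variable {R : Type*} [CommRing R] (F : IdealFiltration R)

/-- The Rees algebra `R[𝓘] = ⊕ₙ Iₙ tⁿ` of a filtration `𝓘 = {Iₙ}`, realized as the subalgebra
of the polynomial ring `R[t]` consisting of those polynomials whose `n`-th coefficient lies
in `Iₙ`. -/
def reesAlgebra : Subalgebra R R[X] where
  carrier := { f | ∀ n, f.coeff n ∈ F.I n }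
  mul_mem' {f g} hf hg n := by
    rw [coeff_mul]
    apply Ideal.sum_mem
    rintro ⟨j, k⟩ e
    have : f.coeff j * g.coeff k ∈ F.I (j + k) :=
      F.I_mul j k (Ideal.mul_mem_mul (hf j) (hg k))
    rwa [show j + k = n by simpa using e] at this
  one_mem' n := by
    rw [coeff_one]
    split_ifs with h
    · rw [h, F.I_zero]; trivial
    · simp
  add_mem' {f g} hf hg n := by
    rw [coeff_add]
    exact Ideal.add_mem _ (hf n) (hg n)
  zero_mem' n := by simp
  algebraMap_mem' r n := by
    rw [Polynomial.algebraMap_apply, coeff_C]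
    split_ifs with h
    · rw [h, F.I_zero]; trivial
    · simp

/-- The analytic spread `ℓ(𝓘) = dim R[𝓘]/m_R R[𝓘]` of a filtration `𝓘` on a local ring. -/
noncomputable def analyticSpread [IsLocalRing R] : WithBot (WithTop ℕ) :=
  ringKrullDim
    (F.reesAlgebra ⧸ (IsLocalRing.maximalIdeal R).map (algebraMap R F.reesAlgebra))

end IdealFiltration

/-!
Since `π` is irrational, `nπ < ⌈nπ⌉` for `n > 0`, so for `r` large the gap `r⌈nπ⌉ - rnπ`
exceeds one and `⌈rnπ⌉ < r⌈nπ⌉`; hence `f ∈ Iₙ` gives `f ^ r ∈ (x) I_{rn}`. Thus every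
homogeneous element `f tⁿ` of positive degree of `R[𝓘]` has a power in `m_R R[𝓘]`, so the only
prime of `R[𝓘]` containing `m_R R[𝓘]` is the maximal ideal `m_R ⊕ ⨁_{n>0} Iₙ tⁿ`, and
`R[𝓘] / m_R R[𝓘]` has dimension zero.
-/

theorem exists_pos_ceil_mul_lt_mul_ceil {K : Type*} [Field K] [LinearOrder K]
    [IsStrictOrderedRing K] [FloorSemiring K] [Archimedean K] {x : K} (hx : 0 ≤ x)
    (hlt : x < ⌈x⌉₊) : ∃ r : ℕ, 0 < r ∧ ⌈(r : K) * x⌉₊ < r * ⌈x⌉₊ := by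
  obtain ⟨r, hr⟩ := exists_nat_gt (⌈x⌉₊ - x)⁻¹
  have hr' : 1 < (r : K) * (⌈x⌉₊ - x) := (inv_lt_iff_one_lt_mul₀ (sub_pos.2 hlt)).1 hr
  refine ⟨r, Nat.pos_of_ne_zero (by rintro rfl; norm_num at hr'), (Nat.cast_lt (α := K)).1 ?_⟩
  calc (⌈(r : K) * x⌉₊ : K) < r * x + 1 := Nat.ceil_lt_add_one (by positivity)
    _ < r * x + r * (⌈x⌉₊ - x) := by linarith
    _ = ((r * ⌈x⌉₊ : ℕ) : K) := by push_cast; ring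

namespace IdealFiltration

variable {R : Type*} [CommRing R]

def spanPow (x : R) (c : ℕ → ℕ) (hc_zero : c 0 = 0) (hc_mono : Monotone c)
    (hc_add : ∀ m n, c (m + n) ≤ c m + c n) : IdealFiltration R where
  I n := Ideal.span {x ^ c n}
  I_zero := by rw [hc_zero, pow_zero, Ideal.span_singleton_one]
  I_antitone n := Ideal.span_singleton_le_span_singleton.2 (pow_dvd_pow x (hc_mono n.le_succ))
  I_mul m n := by
    rw [Ideal.span_singleton_mul_span_singleton, ← pow_add]
    exact Ideal.span_singleton_le_span_singleton.2 (pow_dvd_pow x (hc_add m n))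

theorem pow_mem_span_mul_spanPow {x : R} {c : ℕ → ℕ} {hc_zero : c 0 = 0} {hc_mono : Monotone c}
    {hc_add : ∀ m n, c (m + n) ≤ c m + c n} {n r : ℕ} (hr : c (r * n) < r * c n) {f : R}
    (hf : f ∈ (spanPow x c hc_zero hc_mono hc_add).I n) :
    f ^ r ∈ Ideal.span {x} * (spanPow x c hc_zero hc_mono hc_add).I (r * n) := by
  obtain ⟨g, rfl⟩ := Ideal.mem_span_singleton.1 hf
  rw [spanPow, Ideal.span_singleton_mul_span_singleton, ← pow_succ', Ideal.mem_span_singleton,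
    mul_pow, ← pow_mul, mul_comm (c n)]
  exact (pow_dvd_pow x hr).mul_right _

noncomputable def ceilMul (x : R) {α : ℝ} (hα : 0 ≤ α) : IdealFiltration R :=
  spanPow x (fun n => ⌈(n : ℝ) * α⌉₊) (by simp)
    (fun _ _ h => Nat.ceil_mono (mul_le_mul_of_nonneg_right (Nat.cast_le.2 h) hα))
    (fun m n => by simpa only [Nat.cast_add, add_mul] using Nat.ceil_add_le _ _)

theorem exists_pow_mem_span_mul_ceilMul (x : R) {α : ℝ} (hα : 0 ≤ α) (hα_irr : Irrational α)
    {n : ℕ} (hn : 0 < n) {f : R} (hf : f ∈ (ceilMul x hα).I n) :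
    ∃ r > 0, f ^ r ∈ Ideal.span {x} * (ceilMul x hα).I (r * n) := by
  have hlt : (n : ℝ) * α < ⌈(n : ℝ) * α⌉₊ :=
    (Nat.le_ceil _).lt_of_ne ((hα_irr.natCast_mul hn.ne').ne_nat _)
  obtain ⟨r, hr, hceil⟩ := exists_pos_ceil_mul_lt_mul_ceil (by positivity) hlt
  refine ⟨r, hr, pow_mem_span_mul_spanPow ?_ hf⟩
  simpa only [Nat.cast_mul, mul_assoc] using hceil

end IdealFiltration

theorem Ideal.ringKrullDim_quotient_eq_zero_of_forall_isPrime {S : Type*} [CommRing S]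
    {I M : Ideal S} [M.IsMaximal] (hIM : I ≤ M) (h : ∀ P : Ideal S, P.IsPrime → I ≤ P → P = M) :
    ringKrullDim (S ⧸ I) = 0 := by
  have : Nontrivial (S ⧸ I) := Ideal.Quotient.nontrivial_iff.2 (ne_top_of_le_ne_top
    ‹M.IsMaximal›.ne_top hIM)
  rw [← ringKrullDimZero_iff_ringKrullDim_eq_zero,
    Ideal.krullDimLE_zero_quotient_iff_forall_minimalPrimes_isMaximal]
  intro P hP
  rw [h P hP.1.1 hP.1.2]
  infer_instance

namespace IdealFiltration

open IsLocalRing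

variable {R : Type*} [CommRing R] (F : IdealFiltration R)

theorem monomial_mem_reesAlgebra {d : ℕ} {b : R} (hb : b ∈ F.I d) :
    monomial d b ∈ F.reesAlgebra := fun n => by
  rw [coeff_monomial]
  split_ifs with h
  · exact h ▸ hb
  · exact zero_mem _

variable [IsLocalRing R]

noncomputable def residue : F.reesAlgebra →+* ResidueField R :=
  (IsLocalRing.residue R).comp (constantCoeff.comp F.reesAlgebra.val.toRingHom)

theorem residue_surjective : Function.Surjective F.residue := fun a => by
  obtain ⟨b, rfl⟩ := IsLocalRing.residue_surjective a
  exact ⟨algebraMap R _ b, by simp [residue]⟩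

theorem map_maximalIdeal_le_ker_residue :
    (maximalIdeal R).map (algebraMap R F.reesAlgebra) ≤ RingHom.ker F.residue := by
  rw [Ideal.map_le_iff_le_comap]
  intro a ha
  simpa [residue] using ha

theorem monomial_mem_map_maximalIdeal {d : ℕ} {a : R} (ha : a ∈ maximalIdeal R * F.I d) :
    (⟨monomial d a, F.monomial_mem_reesAlgebra (Ideal.mul_le_right ha)⟩ : F.reesAlgebra) ∈
      (maximalIdeal R).map (algebraMap R F.reesAlgebra) := by
  induction ha using Submodule.mul_induction_on' with
  | mem_mul_mem μ hμ b hb =>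
    convert Ideal.mul_mem_right ⟨monomial d b, F.monomial_mem_reesAlgebra hb⟩ _
      (Ideal.mem_map_of_mem (algebraMap R F.reesAlgebra) hμ) using 1
    exact Subtype.ext (by simp [← C_mul_monomial])
  | add a _ b _ ha hb =>
    convert Ideal.add_mem _ ha hb using 1
    exact Subtype.ext (map_add (monomial d) a b)

variable {F}

theorem ker_residue_le_of_isPrime
    (hF : ∀ n > 0, ∀ f ∈ F.I n, ∃ r > 0, f ^ r ∈ maximalIdeal R * F.I (r * n))
    {P : Ideal F.reesAlgebra} [P.IsPrime]
    (hP : (maximalIdeal R).map (algebraMap R F.reesAlgebra) ≤ P) :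
    RingHom.ker F.residue ≤ P := by
  rintro ⟨p, hp⟩ hres
  have hcoeff_zero : p.coeff 0 ∈ maximalIdeal R := by simpa [residue] using hres
  have hmonomial (i : ℕ) :
      (⟨monomial i (p.coeff i), F.monomial_mem_reesAlgebra (hp i)⟩ : F.reesAlgebra) ∈ P := by
    rcases i with _ | i
    · refine hP (F.monomial_mem_map_maximalIdeal ?_)
      rw [F.I_zero, Ideal.mul_top]
      exact hcoeff_zero
    · obtain ⟨r, -, hpow⟩ := hF (i + 1) i.succ_pos _ (hp (i + 1))
      refine ‹P.IsPrime›.mem_of_pow_mem r (hP ?_)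
      convert F.monomial_mem_map_maximalIdeal hpow using 1
      exact Subtype.ext (by simp [monomial_pow, mul_comm])
  have hsum : (⟨p, hp⟩ : F.reesAlgebra) =
      ∑ i ∈ p.support, ⟨monomial i (p.coeff i), F.monomial_mem_reesAlgebra (hp i)⟩ :=
    Subtype.ext (by simpa using p.as_sum_support)
  rw [hsum]
  exact Ideal.sum_mem _ fun i _ => hmonomial i

theorem analyticSpread_eq_zero_of_forall_pow_mem
    (hF : ∀ n > 0, ∀ f ∈ F.I n, ∃ r > 0, f ^ r ∈ maximalIdeal R * F.I (r * n)) :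
    F.analyticSpread = 0 := by
  have hmax := RingHom.ker_isMaximal_of_surjective _ F.residue_surjective
  exact Ideal.ringKrullDim_quotient_eq_zero_of_forall_isPrime F.map_maximalIdeal_le_ker_residue
    fun P hPrime hP => (hmax.eq_of_le hPrime.ne_top (ker_residue_le_of_isPrime hF hP)).symm

end IdealFiltration

open PowerSeries IsLocalRing in
/-- Let `k` be a field, `R = k[[x]]` with maximal ideal `m_R = (x)`, and for
`n ∈ ℕ` let `I_n = (x^{⌈nπ⌉})`.  Then `𝓘 = {I_n}` is a filtration on `R` whose analytic spread
is `ℓ(𝓘) = 0 < 1 = dim R`; in particular for every `n > 0` and every `f ∈ I_n` there is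
`r ∈ ℤ_{>0}` with `f ^ r ∈ m_R I_{rn}`. -/
theorem powerSeries_ceil_pi_filtration (k : Type*) [Field k] :
    Ideal.span {(PowerSeries.X : PowerSeries k)}
        = IsLocalRing.maximalIdeal (PowerSeries k) ∧
      ∃ F : IdealFiltration (PowerSeries k),
        (∀ n : ℕ, F.I n
          = Ideal.span {(PowerSeries.X : PowerSeries k) ^ ⌈(n : ℝ) * Real.pi⌉₊}) ∧
        F.analyticSpread = 0 ∧
        (0 : WithBot (WithTop ℕ)) < 1 ∧
        ringKrullDim (PowerSeries k) = 1 ∧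
        ∀ n > 0, ∀ f ∈ F.I n, ∃ r > 0,
          f ^ r ∈ IsLocalRing.maximalIdeal (PowerSeries k) * F.I (r * n) := by
  let F := IdealFiltration.ceilMul (X : PowerSeries k) Real.pi_pos.le
  have hF : ∀ n > 0, ∀ f ∈ F.I n, ∃ r > 0, f ^ r ∈ maximalIdeal (PowerSeries k) * F.I (r * n) := by
    rw [maximalIdeal_eq_span_X]
    exact fun n hn f hf => IdealFiltration.exists_pow_mem_span_mul_ceilMul _ _ irrational_pi hn hf
  exact ⟨maximalIdeal_eq_span_X.symm, F, fun n => rfl,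
    F.analyticSpread_eq_zero_of_forall_pow_mem hF, zero_lt_one,
    IsDiscreteValuationRing.ringKrullDim_eq_one _, hF⟩
end

section
/- Let R be a normal excellent local ring, π: X → Spec(R) a birational projective morphism with X regular, D an ℝ-divisor on X, and Γ a prime divisor on X. Then Γ(X, O_X(⌊nD⌋)) = Γ(X, O_X(⌊n(D − γ_Γ(D)Γ)⌋)) for all n ∈ ℕ. -/
universe u

/-- A regular local ring: a Noetherian local ring whose maximal ideal can be generated by
`dim A` elements. -/
def IsRegularLocalRing' (A : Type*) [CommRing A] [IsLocalRing A] : Prop :=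
  IsNoetherianRing A ∧ ∃ s : Finset A,
    Ideal.span (s : Set A) = IsLocalRing.maximalIdeal A ∧
    (s.card : WithBot (WithTop ℕ)) = ringKrullDim A

/-- A regular ring: a Noetherian ring all of whose localizations at primes are regular local
rings. -/
def IsRegularRing' (A : Type*) [CommRing A] : Prop :=
  IsNoetherianRing A ∧
    ∀ p : PrimeSpectrum A, IsRegularLocalRing' (Localization.AtPrime p.asIdeal)

/-- The `A`-algebra `B` is geometrically regular (a regular morphism): it is flat, and for
every prime `q` of `A` and every finite field extension `L` of the residue field `κ(q)`,
the ring `L ⊗_A B` is regular. -/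
def Algebra.IsGeometricallyRegular (A B : Type u) [CommRing A] [CommRing B] [Algebra A B] :
    Prop :=
  Module.Flat A B ∧
    ∀ (q : PrimeSpectrum A) (L : Type u) [Field L] [Algebra A L]
      [Algebra (IsLocalRing.ResidueField (Localization.AtPrime q.asIdeal)) L]
      [IsScalarTower A (IsLocalRing.ResidueField (Localization.AtPrime q.asIdeal)) L],
      FiniteDimensional (IsLocalRing.ResidueField (Localization.AtPrime q.asIdeal)) L →
      IsRegularRing' (TensorProduct A L B)

/-- `R` is a G-ring (Grothendieck ring): for every prime `p`, the formal fibers of `R_p` are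
geometrically regular, i.e. the completion map `R_p → (R_p)^` is a regular morphism. -/
def IsGrothendieckRing (R : Type u) [CommRing R] : Prop :=
  ∀ p : PrimeSpectrum R,
    Algebra.IsGeometricallyRegular (Localization.AtPrime p.asIdeal)
      (AdicCompletion (IsLocalRing.maximalIdeal (Localization.AtPrime p.asIdeal))
        (Localization.AtPrime p.asIdeal))

/-- `R` is J-2: every finitely generated `R`-algebra has open regular locus. -/
def IsJTwo (R : Type u) [CommRing R] : Prop :=
  ∀ (n : ℕ) (I : Ideal (MvPolynomial (Fin n) R)),
    IsOpen {p : PrimeSpectrum (MvPolynomial (Fin n) R ⧸ I) |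
      IsRegularLocalRing' (Localization.AtPrime p.asIdeal)}

/-- A catenary ring: any two saturated chains of primes with the same endpoints have the
same length. -/
def IsCatenaryRing (A : Type*) [CommRing A] : Prop :=
  ∀ c₁ c₂ : LTSeries (PrimeSpectrum A),
    c₁.head = c₂.head → c₁.last = c₂.last →
    (∀ i : Fin c₁.length, c₁.toFun i.castSucc ⋖ c₁.toFun i.succ) →
    (∀ i : Fin c₂.length, c₂.toFun i.castSucc ⋖ c₂.toFun i.succ) →
    c₁.length = c₂.length

/-- `R` is universally catenary: every finitely generated `R`-algebra is catenary. -/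
def IsUniversallyCatenary (R : Type u) [CommRing R] : Prop :=
  ∀ (n : ℕ) (I : Ideal (MvPolynomial (Fin n) R)),
    IsCatenaryRing (MvPolynomial (Fin n) R ⧸ I)

/-- An excellent ring: a Noetherian, universally catenary G-ring satisfying J-2. -/
def IsExcellentRing (R : Type u) [CommRing R] : Prop :=
  IsNoetherianRing R ∧ IsUniversallyCatenary R ∧ IsGrothendieckRing R ∧ IsJTwo R

/-- The data of a birational projective morphism `π : X → Spec R` with `X` regular
(a nonsingular model of the normal excellent local domain `R`), recorded through its divisor
theory: the type of prime divisors `E` on `X` (integral closed subschemes of codimension one)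
together with the discrete valuations `ord_E = ν_E` of the function field `K = Frac R` of `X`
given by the one-dimensional regular (hence discrete valuation) local rings `O_{X,E}`. -/
structure RegularBirationalModel (R : Type*) [CommRing R] [IsDomain R] where
  /-- The prime divisors on `X`. -/
  PrimeDivisor : Type*
  /-- `ord E f = ν_E(f)`, the order of vanishing of the rational function `f ∈ K` along the
  prime divisor `E` (the value at `f = 0` is irrelevant). -/
  ord : PrimeDivisor → FractionRing R → ℤ
  ord_mul : ∀ E (x y : FractionRing R), x ≠ 0 → y ≠ 0 →
    ord E (x * y) = ord E x + ord E y
  ord_add : ∀ E (x y : FractionRing R), x ≠ 0 → y ≠ 0 → x + y ≠ 0 →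
    min (ord E x) (ord E y) ≤ ord E (x + y)
  /-- Each `O_{X,E}` is a discrete valuation ring with value group `ℤ`. -/
  ord_surj : ∀ E (n : ℤ), ∃ x : FractionRing R, x ≠ 0 ∧ ord E x = n
  /-- Distinct prime divisors give distinct valuations. -/
  ord_injective : Function.Injective ord
  /-- A nonzero rational function has finitely many zeros and poles: `(f) = Σ_E ν_E(f) E`
  is a divisor. -/
  finite_support : ∀ x : FractionRing R, x ≠ 0 → {E | ord E x ≠ 0}.Finite
  /-- `π : X → Spec R`: every local ring `O_{X,E}` contains `R`. -/
  ord_nonneg : ∀ E (r : R), r ≠ 0 → 0 ≤ ord E (algebraMap R (FractionRing R) r)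
  /-- `π` is proper and birational and `X` is normal: `Γ(X, O_X) = R`, i.e. a rational
  function with no poles along any prime divisor of `X` belongs to `R`. -/
  globalSections : ∀ x : FractionRing R, x ≠ 0 → (∀ E, 0 ≤ ord E x) →
    ∃ r : R, algebraMap R (FractionRing R) r = x

namespace RegularBirationalModel

variable {R : Type*} [CommRing R] [IsDomain R] (M : RegularBirationalModel R)

/-- An ℝ-divisor `D = Σ aᵢ Eᵢ` on `X`, i.e. a finitely supported real-valued function on the
prime divisors of `X`. -/
def IsDivisor (D : M.PrimeDivisor → ℝ) : Prop := (Function.support D).Finite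

/-- An effective divisor: all coefficients nonnegative. -/
def IsEffective (D : M.PrimeDivisor → ℝ) : Prop := ∀ E, 0 ≤ D E

/-- Linear equivalence of ℝ-divisors: `D₁ ∼ D₂` iff `D₁ − D₂ = (f)` for some `f ∈ K`. -/
def LinEquiv (D₁ D₂ : M.PrimeDivisor → ℝ) : Prop :=
  ∃ x : FractionRing R, x ≠ 0 ∧ ∀ E, D₁ E - D₂ E = (M.ord E x : ℝ)

/-- `τ_Γ(D) = inf {ord_Γ(G) : G ≥ 0, G ∼ D}`. -/
noncomputable def tau (Γ : M.PrimeDivisor) (D : M.PrimeDivisor → ℝ) : ℝ :=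
  sInf {t : ℝ | ∃ G : M.PrimeDivisor → ℝ, M.IsEffective G ∧ M.LinEquiv G D ∧ t = G Γ}

/-- `γ_Γ(D) = inf {τ_Γ(mD)/m : m ∈ ℤ_{>0}}`. -/
noncomputable def gamma (Γ : M.PrimeDivisor) (D : M.PrimeDivisor → ℝ) : ℝ :=
  sInf {t : ℝ | ∃ m : ℕ, 0 < m ∧ t = M.tau Γ (fun E => m * D E) / m}

/-- The divisor `c Γ` supported on the single prime divisor `Γ`. -/
noncomputable def single (Γ : M.PrimeDivisor) (c : ℝ) : M.PrimeDivisor → ℝ :=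
  open scoped Classical in fun E => if E = Γ then c else 0

/-- `Γ(X, O_X(⌊D⌋)) = {f ∈ K ∣ (f) + D ≥ 0} ⊆ K` (which only depends on `⌊D⌋` since the
functions `ord_E` are integer-valued). -/
def sections (D : M.PrimeDivisor → ℝ) : Set (FractionRing R) :=
  {x | x = 0 ∨ ∀ E, 0 ≤ (M.ord E x : ℝ) + D E}

end RegularBirationalModel

/-!
A nonzero section `f` of `⌊nD⌋` gives the effective divisor `(f) + nD ∼ nD`, whose coefficient
along `Γ` is therefore at least `τ_Γ(nD) ≥ n γ_Γ(D)`. So `(f) + nD - n γ_Γ(D) Γ` is still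
effective, and since `γ_Γ(D) ≥ 0` the reverse inclusion is monotonicity of sections.
-/

namespace RegularBirationalModel

variable {R : Type*} [CommRing R] [IsDomain R] (M : RegularBirationalModel R)
  {Γ : M.PrimeDivisor} {D : M.PrimeDivisor → ℝ}

theorem single_self (c : ℝ) : M.single Γ c Γ = c := by
  simp [single]

theorem single_of_ne (c : ℝ) {E : M.PrimeDivisor} (hE : E ≠ Γ) : M.single Γ c E = 0 := by
  simp [single, hE]

theorem single_nonneg {c : ℝ} (hc : 0 ≤ c) (E : M.PrimeDivisor) : 0 ≤ M.single Γ c E := by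
  by_cases hE : E = Γ
  · rw [hE, single_self]
    exact hc
  · rw [single_of_ne M c hE]

theorem mul_single (a c : ℝ) (E : M.PrimeDivisor) :
    a * M.single Γ c E = M.single Γ (a * c) E := by
  by_cases hE : E = Γ
  · rw [hE, single_self, single_self]
  · rw [single_of_ne M _ hE, single_of_ne M _ hE, mul_zero]

theorem bddBelow_tau_set (Γ : M.PrimeDivisor) (D : M.PrimeDivisor → ℝ) :
    BddBelow {t : ℝ | ∃ G, M.IsEffective G ∧ M.LinEquiv G D ∧ t = G Γ} :=
  ⟨0, by rintro t ⟨G, hG, -, rfl⟩; exact hG Γ⟩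

theorem tau_nonneg (Γ : M.PrimeDivisor) (D : M.PrimeDivisor → ℝ) : 0 ≤ M.tau Γ D :=
  Real.sInf_nonneg (by rintro t ⟨G, hG, -, rfl⟩; exact hG Γ)

theorem tau_le_of_linEquiv {G : M.PrimeDivisor → ℝ} (hG : M.IsEffective G)
    (hGD : M.LinEquiv G D) : M.tau Γ D ≤ G Γ :=
  csInf_le (M.bddBelow_tau_set Γ D) ⟨G, hG, hGD, rfl⟩

theorem tau_le_ord_add_of_mem_sections {x : FractionRing R} (hx : x ≠ 0)
    (hxD : x ∈ M.sections D) : M.tau Γ D ≤ M.ord Γ x + D Γ := by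
  have hG : M.IsEffective fun E => (M.ord E x : ℝ) + D E := hxD.resolve_left hx
  exact M.tau_le_of_linEquiv hG ⟨x, hx, fun E => by ring⟩

theorem gamma_nonneg (Γ : M.PrimeDivisor) (D : M.PrimeDivisor → ℝ) : 0 ≤ M.gamma Γ D :=
  Real.sInf_nonneg (by
    rintro t ⟨m, -, rfl⟩
    exact div_nonneg (M.tau_nonneg _ _) m.cast_nonneg)

theorem gamma_le_tau_div {m : ℕ} (hm : 0 < m) :
    M.gamma Γ D ≤ M.tau Γ (fun E => m * D E) / m := by
  refine csInf_le ⟨0, ?_⟩ ⟨m, hm, rfl⟩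
  rintro t ⟨k, -, rfl⟩
  exact div_nonneg (M.tau_nonneg _ _) k.cast_nonneg

theorem mul_gamma_le_ord_add_of_mem_sections (n : ℕ) {x : FractionRing R} (hx : x ≠ 0)
    (hxD : x ∈ M.sections fun E => n * D E) : n * M.gamma Γ D ≤ M.ord Γ x + n * D Γ := by
  rcases Nat.eq_zero_or_pos n with rfl | hn
  · simpa using (hxD.resolve_left hx) Γ
  have hnR : (0 : ℝ) < n := Nat.cast_pos.mpr hn
  calc (n : ℝ) * M.gamma Γ D ≤ n * (M.tau Γ (fun E => n * D E) / n) :=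
        mul_le_mul_of_nonneg_left (M.gamma_le_tau_div hn) hnR.le
    _ = M.tau Γ (fun E => n * D E) := mul_div_cancel₀ _ hnR.ne'
    _ ≤ M.ord Γ x + n * D Γ := M.tau_le_ord_add_of_mem_sections hx hxD

theorem sections_mono {D₁ D₂ : M.PrimeDivisor → ℝ} (h : ∀ E, D₁ E ≤ D₂ E) :
    M.sections D₁ ⊆ M.sections D₂ := by
  rintro x (hx | hx)
  · exact Or.inl hx
  · exact Or.inr fun E => (hx E).trans (by linarith [h E])

theorem sections_sub_single_eq {c : ℝ} (hc : 0 ≤ c)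
    (h : ∀ x ∈ M.sections D, x ≠ 0 → c ≤ M.ord Γ x + D Γ) :
    M.sections (fun E => D E - M.single Γ c E) = M.sections D := by
  refine (M.sections_mono fun E => by linarith [M.single_nonneg (Γ := Γ) hc E]).antisymm ?_
  intro x hxD
  rcases eq_or_ne x 0 with hx | hx
  · exact Or.inl hx
  refine Or.inr fun E => ?_
  show 0 ≤ (M.ord E x : ℝ) + (D E - M.single Γ c E)
  by_cases hE : E = Γ
  · rw [hE, single_self]
    linarith [h x hxD hx]
  · rw [single_of_ne M c hE, sub_zero]
    exact (hxD.resolve_left hx) E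

end RegularBirationalModel

theorem sections_eq_sections_sub_gamma_single_general {R : Type u} [CommRing R] [IsDomain R]
    (M : RegularBirationalModel R) (D : M.PrimeDivisor → ℝ)
    (Γ : M.PrimeDivisor) :
    ∀ n : ℕ, M.sections (fun E => n * D E)
      = M.sections (fun E => n * (D E - M.single Γ (M.gamma Γ D) E)) := by
  intro n
  have hdist : (fun E => n * (D E - M.single Γ (M.gamma Γ D) E))
      = fun E => n * D E - M.single Γ (n * M.gamma Γ D) E := by
    funext E
    rw [mul_sub, M.mul_single]
  rw [hdist, M.sections_sub_single_eq (mul_nonneg n.cast_nonneg (M.gamma_nonneg Γ D))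
    fun x hxD hx => M.mul_gamma_le_ord_add_of_mem_sections n hx hxD]

/-- Lemma E. Let `R` be a normal excellent local ring, `π : X → Spec R` a
birational projective morphism with `X` regular, `D` an ℝ-divisor and `Γ` a prime divisor
on `X`.  Then `Γ(X, O_X(⌊nD⌋)) = Γ(X, O_X(⌊n(D − γ_Γ(D)Γ)⌋))` for all `n ∈ ℕ`. -/
theorem sections_eq_sections_sub_gamma_single {R : Type u} [CommRing R] [IsDomain R]
    [IsIntegrallyClosed R] [IsLocalRing R] (hexc : IsExcellentRing R)
    (M : RegularBirationalModel R) (D : M.PrimeDivisor → ℝ) (hD : M.IsDivisor D)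
    (Γ : M.PrimeDivisor) :
    ∀ n : ℕ, M.sections (fun E => n * D E)
      = M.sections (fun E => n * (D E - M.single Γ (M.gamma Γ D) E)) :=
  sections_eq_sections_sub_gamma_single_general M D Γ
end
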